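/- Let a < b be real numbers, let 0 < α < 1, let f : ℝ → ℝ be continuous on [a, b], and suppose f has (right) derivative f′(a) at a. Then Γ(3−α) · (x − a)^{α−2} · (1/Γ(1−α)) ∫_a^x (x − z)^{−α} (f(z) − f(a)) dz tends to f′(a) as x tends to a from the right. (In particular, the Riemann–Liouville fractional integral of order 1−α of f − f(a) satisfies (I^{1−α}_a (f − f(a)))(x) = f′(a) (x−a)^{2−α} / Γ(3−α) + o((x−a)^{2−α}) as x → a⁺.) -/

import Mathlib

open Real MeasureTheory Filter Topology intervalIntegral Asymptotics

/-!
Write `f z - f a = f' (z - a) + r z` with `r = o(z - a)` as `z → a⁺`. Against the kernel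
`(x - z)^(-α)` the linear part integrates exactly to `f' (x - a)^(2-α) / ((1 - α)(2 - α))`,
and `Γ(3 - α) = (1 - α)(2 - α) Γ(1 - α)` turns this into `f' (x - a)^(2-α) / Γ(3 - α)`.
For `x` close to `a` the remainder satisfies `|r z| ≤ ε (z - a)` on `[a, x]`, so its kernel
integral is at most `ε` times the same exact integral, i.e. `o((x - a)^(2-α))`.
-/

lemma Real.Gamma_add_two {s : ℝ} (hs : s ≠ 0) (hs₁ : s + 1 ≠ 0) :
    Gamma (s + 2) = s * (s + 1) * Gamma s := by
  rw [show s + 2 = s + 1 + 1 by ring, Gamma_add_one hs₁, Gamma_add_one hs]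
  ring

section RiemannLiouvilleKernel

variable {a x β : ℝ}

lemma intervalIntegrable_sub_rpow (hβ : -1 < β) :
    IntervalIntegrable (fun z => (x - z) ^ β) volume a x := by
  simpa using (intervalIntegrable_rpow' hβ (a := x - a) (b := x - x)).comp_sub_left x

lemma integral_sub_rpow (hβ : -1 < β) :
    ∫ z in a..x, (x - z) ^ β = (x - a) ^ (β + 1) / (β + 1) := by
  rw [intervalIntegral.integral_comp_sub_left (fun u => u ^ β) x, sub_self,
    integral_rpow (Or.inl hβ), zero_rpow (by linarith), sub_zero]

lemma integral_sub_rpow_mul_sub (hβ : -1 < β) (hax : a ≤ x) :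
    ∫ z in a..x, (x - z) ^ β * (z - a) = (x - a) ^ (β + 2) / ((β + 1) * (β + 2)) := by
  have hintegrand : ∀ z ∈ Set.uIcc a x,
      (x - z) ^ β * (z - a) = (x - a) * (x - z) ^ β - (x - z) ^ (β + 1) := by
    intro z hz
    rw [Set.uIcc_of_le hax] at hz
    rw [rpow_add_one' (by linarith [hz.2]) (by linarith)]
    ring
  have hpow : (x - a) * (x - a) ^ (β + 1) = (x - a) ^ (β + 2) := by
    rw [← rpow_one_add' (by linarith) (by linarith)]
    ring_nf
  rw [integral_congr hintegrand,
    integral_sub ((intervalIntegrable_sub_rpow hβ).const_mul _)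
      (intervalIntegrable_sub_rpow (by linarith)),
    intervalIntegral.integral_const_mul, integral_sub_rpow hβ, integral_sub_rpow (by linarith),
    mul_div_assoc', hpow, show β + 1 + 1 = β + 2 by ring]
  have : β + 1 ≠ 0 := by linarith
  have : β + 2 ≠ 0 := by linarith
  field_simp
  ring

lemma integral_sub_rpow_mul_sub_linear {g : ℝ → ℝ} (hβ : -1 < β) (hax : a ≤ x)
    (hg : IntervalIntegrable (fun z => (x - z) ^ β * g z) volume a x) (c : ℝ) :
    ∫ z in a..x, (x - z) ^ β * (g z - (z - a) * c)
      = (∫ z in a..x, (x - z) ^ β * g z) - c * ((x - a) ^ (β + 2) / ((β + 1) * (β + 2))) := by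
  have hlin : IntervalIntegrable (fun z => (x - z) ^ β * (z - a)) volume a x :=
    (intervalIntegrable_sub_rpow hβ).mul_continuousOn (by fun_prop)
  rw [← integral_sub_rpow_mul_sub hβ hax, ← intervalIntegral.integral_const_mul,
    ← integral_sub hg (hlin.const_mul c)]
  congr 1 with z
  ring

theorem isLittleO_integral_sub_rpow_mul {r : ℝ → ℝ} (hβ : -1 < β)
    (hr : r =o[𝓝[≥] a] fun z => z - a) :
    (fun x => ∫ z in a..x, (x - z) ^ β * r z) =o[𝓝[>] a] fun x => (x - a) ^ (β + 2) := by
  have hβ1 : 0 < β + 1 := by linarith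
  have hβ2 : 0 < β + 2 := by linarith
  refine IsLittleO.of_bound fun ε hε => ?_
  obtain ⟨u, hau, hu⟩ := mem_nhdsGE_iff_exists_Ico_subset.mp
    (hr.def (show 0 < ε * ((β + 1) * (β + 2)) by positivity))
  filter_upwards [Ioo_mem_nhdsGT hau] with x ⟨hax, hxu⟩
  have hbound : ∀ z ∈ Set.Ioc a x,
      ‖(x - z) ^ β * r z‖ ≤ ε * ((β + 1) * (β + 2)) * ((x - z) ^ β * (z - a)) := by
    intro z ⟨haz, hzx⟩
    have hrz := hu ⟨haz.le, hzx.trans_lt hxu⟩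
    simp only [Set.mem_ofPred_eq, norm_eq_abs, abs_of_pos (sub_pos.mpr haz)] at hrz
    rw [norm_mul, norm_of_nonneg (rpow_nonneg (sub_nonneg.mpr hzx) _)]
    calc (x - z) ^ β * ‖r z‖
        ≤ (x - z) ^ β * (ε * ((β + 1) * (β + 2)) * (z - a)) :=
          mul_le_mul_of_nonneg_left hrz (rpow_nonneg (sub_nonneg.mpr hzx) _)
      _ = _ := by ring
  have hint : IntervalIntegrable (fun z => (x - z) ^ β * (z - a)) volume a x :=
    (intervalIntegrable_sub_rpow hβ).mul_continuousOn (by fun_prop)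
  calc ‖∫ z in a..x, (x - z) ^ β * r z‖
      ≤ ∫ z in a..x, ε * ((β + 1) * (β + 2)) * ((x - z) ^ β * (z - a)) :=
        norm_integral_le_of_norm_le hax.le (ae_of_all _ hbound) (hint.const_mul _)
    _ = ε * ‖(x - a) ^ (β + 2)‖ := by
        rw [intervalIntegral.integral_const_mul, integral_sub_rpow_mul_sub hβ hax.le,
          norm_of_nonneg (rpow_nonneg (sub_nonneg.mpr hax.le) _)]
        field_simp

end RiemannLiouvilleKernel

theorem rl_integral_of_reduced_asymptotic_general (a b : ℝ) (hab : a < b) (α : ℝ)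
    (hα2 : α < 1) (f : ℝ → ℝ)
    (hf : ContinuousOn f (Set.Icc a b)) (f' : ℝ)
    (hf' : HasDerivWithinAt f f' (Set.Ici a) a) :
    Tendsto (fun x : ℝ =>
        Real.Gamma (3 - α) * (x - a) ^ (α - 2) *
          ((1 / Real.Gamma (1 - α)) * ∫ z in a..x, (x - z) ^ (-α) * (f z - f a)))
      (𝓝[>] a) (𝓝 f') := by
  have hΓ : Gamma (3 - α) = (-α + 1) * (-α + 2) * Gamma (1 - α) := by
    rw [show 3 - α = (1 - α) + 2 by ring, Gamma_add_two (by linarith) (by linarith)]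
    ring
  have hrem : Tendsto (fun x =>
      (∫ z in a..x, (x - z) ^ (-α) * (f z - f a - (z - a) * f')) / (x - a) ^ (-α + 2))
      (𝓝[>] a) (𝓝 0) :=
    IsLittleO.tendsto_div_nhds_zero <| isLittleO_integral_sub_rpow_mul (by linarith) <| by
      simpa only [smul_eq_mul] using hasDerivWithinAt_iff_isLittleO.mp hf'
  have hsplit : ∀ᶠ x in 𝓝[>] a, f' + (-α + 1) * (-α + 2) *
        ((∫ z in a..x, (x - z) ^ (-α) * (f z - f a - (z - a) * f')) / (x - a) ^ (-α + 2))
      = Gamma (3 - α) * (x - a) ^ (α - 2) *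
          ((1 / Gamma (1 - α)) * ∫ z in a..x, (x - z) ^ (-α) * (f z - f a)) := by
    filter_upwards [Ioc_mem_nhdsGT hab] with x ⟨hax, hxb⟩
    have hint : IntervalIntegrable (fun z => (x - z) ^ (-α) * (f z - f a)) volume a x :=
      (intervalIntegrable_sub_rpow (by linarith)).mul_continuousOn
        ((hf.mono (Set.uIcc_of_le hax.le ▸ Set.Icc_subset_Icc le_rfl hxb)).sub
          continuousOn_const)
    have hp : (x - a) ^ (α - 2) = ((x - a) ^ (-α + 2))⁻¹ := by
      rw [← rpow_neg (sub_nonneg.mpr hax.le)]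
      ring_nf
    have : (x - a) ^ (-α + 2) ≠ 0 := (rpow_pos_of_pos (sub_pos.mpr hax) _).ne'
    have : Gamma (1 - α) ≠ 0 := (Gamma_pos_of_pos (by linarith)).ne'
    have : -α + 1 ≠ 0 := by linarith
    have : -α + 2 ≠ 0 := by linarith
    rw [integral_sub_rpow_mul_sub_linear (by linarith) hax.le hint, hp, hΓ]
    field_simp
    ring
  refine Tendsto.congr' hsplit ?_
  simpa using tendsto_const_nhds.add (hrem.const_mul ((-α + 1) * (-α + 2)))

theorem rl_integral_of_reduced_asymptotic (a b : ℝ) (hab : a < b) (α : ℝ)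
    (hα1 : 0 < α) (hα2 : α < 1) (f : ℝ → ℝ)
    (hf : ContinuousOn f (Set.Icc a b)) (f' : ℝ)
    (hf' : HasDerivWithinAt f f' (Set.Ici a) a) :
    Tendsto (fun x : ℝ =>
        Real.Gamma (3 - α) * (x - a) ^ (α - 2) *
          ((1 / Real.Gamma (1 - α)) * ∫ z in a..x, (x - z) ^ (-α) * (f z - f a)))
      (𝓝[>] a) (𝓝 f') :=
  rl_integral_of_reduced_asymptotic_general a b hab α hα2 f hf f' hf'
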